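/- arXiv:2412.20102 — 4 statements merged into one kernel-verified Lean document; each statement's English description precedes it below -/
import Mathlib

section
/- Let a ∈ ℕ₀ and b ∈ ℤ. Then as t → ∞, ∫₂^{√t} (log log(t/u))^a / (u (log u) (log(t/u))^b) du = ((log log t)^{a+1} + P(log log t)) / (log t)^b + O((log log t)^a / (log t)^{b+1}), where P is some polynomial of degree at most a. -/
open Real Filter Asymptotics MeasureTheory intervalIntegral

lemma abs_log_one_sub_le {w : ℝ} (h0 : 0 ≤ w) (h1 : w ≤ 1/2) : |Real.log (1 - w)| ≤ 2 * w := by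
  have hw1 : (0:ℝ) < 1 - w := by linarith
  have hlog : Real.log (1 - w) ≤ 0 := Real.log_nonpos (by linarith) (by linarith)
  rw [abs_of_nonpos hlog]
  have h := Real.log_le_sub_one_of_pos (show (0:ℝ) < (1-w)⁻¹ by positivity)
  rw [Real.log_inv] at h
  have h3 : (1-w)⁻¹ - 1 ≤ 2 * w := by
    rw [inv_eq_one_div, div_sub' hw1.ne', div_le_iff₀ hw1]
    nlinarith
  linarith

lemma zpow_le_two_pow {y : ℝ} (h0 : 1/2 ≤ y) (h1 : y ≤ 1) (m : ℤ) :
    |y ^ m| ≤ 2 ^ m.natAbs := by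
  have hy : (0:ℝ) < y := by linarith
  rw [abs_of_nonneg (zpow_nonneg hy.le m)]
  rcases le_or_gt 0 m with hm | hm
  · lift m to ℕ using hm
    rw [zpow_natCast, Int.natAbs_natCast]
    calc y ^ m ≤ 1 ^ m := pow_le_pow_left₀ hy.le h1 m
    _ = 1 := one_pow m
    _ ≤ 2 ^ m := one_le_pow₀ (by norm_num)
  · obtain ⟨n, rfl⟩ : ∃ n : ℕ, m = -(n:ℤ) := ⟨m.natAbs, by omega⟩
    rw [zpow_neg, zpow_natCast, Int.natAbs_neg, Int.natAbs_natCast]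
    rw [inv_le_comm₀ (by positivity) (by positivity)]
    calc ((2:ℝ)^n)⁻¹ = (1/2)^n := by rw [one_div, inv_pow]
    _ ≤ y ^ n := pow_le_pow_left₀ (by norm_num) h0 n

lemma psi_lipschitz (b : ℤ) {w : ℝ} (h0 : 0 ≤ w) (h1 : w ≤ 1/2) :
    |(1 - w) ^ (-b) - 1| ≤ (|(b:ℝ)| * 2 ^ (b+1).natAbs) * w := by
  have key : ∀ x ∈ Set.Icc (0:ℝ) (1/2), HasDerivWithinAt (fun x : ℝ => (1-x) ^ (-b))
      ((b:ℝ) * (1-x) ^ (-b-1)) (Set.Icc (0:ℝ) (1/2)) x := by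
    intro x hx
    have hx1 : (1:ℝ) - x ≠ 0 := by simp at hx; intro h; nlinarith [hx.1, hx.2]
    have h1 : HasDerivAt (fun y : ℝ => y ^ (-b)) ((-b : ℝ) * (1-x) ^ (-b-1)) (1-x) := by
      simpa using hasDerivAt_zpow (-b) (1-x) (Or.inl hx1)
    have h2 : HasDerivAt (fun x : ℝ => 1 - x) (-1) x := by
      simpa using (hasDerivAt_id x).const_sub 1
    have := h1.comp x h2
    exact this.hasDerivWithinAt.congr_deriv (by ring)
  have bound : ∀ x ∈ Set.Icc (0:ℝ) (1/2), ‖(b:ℝ) * (1-x) ^ (-b-1)‖ ≤ |(b:ℝ)| * 2 ^ (b+1).natAbs := by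
    intro x hx
    simp only [norm_mul, Real.norm_eq_abs]
    gcongr
    have := zpow_le_two_pow (y := 1-x) (by simp at hx; linarith [hx.2]) (by simp at hx; linarith [hx.1]) (-b-1)
    simpa [show (-b-1).natAbs = (b+1).natAbs by omega] using this
  have := Convex.norm_image_sub_le_of_norm_hasDerivWithin_le key bound (convex_Icc _ _)
    (Set.mem_Icc.2 ⟨le_refl 0, by norm_num⟩) (Set.mem_Icc.2 ⟨h0, h1⟩)
  simpa [abs_of_nonneg h0] using this

noncomputable def phi (a : ℕ) (b : ℤ) (k : ℕ) (w : ℝ) : ℝ :=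
  (Real.log (1-w))^(a-k) * (1-w)^(-b) / w

noncomputable def hfun (b : ℤ) (w : ℝ) : ℝ := ((1-w)^(-b) - 1)/w

lemma measurable_zpow_real (m : ℤ) : Measurable fun x : ℝ => x ^ m := by measurability

lemma phi_meas (a : ℕ) (b : ℤ) (k : ℕ) : Measurable (phi a b k) := by
  unfold phi
  exact (((measurable_const.sub measurable_id).log.pow_const _).mul
    ((measurable_zpow_real (-b)).comp (measurable_const.sub measurable_id))).div measurable_id

lemma hfun_meas (b : ℤ) : Measurable (hfun b) := by
  unfold hfun
  exact ((((measurable_zpow_real (-b)).comp (measurable_const.sub measurable_id)).sub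
    measurable_const).div measurable_id)

lemma phi_bound (a : ℕ) (b : ℤ) {k : ℕ} (hk : k < a) {w : ℝ} (h0 : 0 ≤ w) (h1 : w ≤ 1/2) :
    |phi a b k w| ≤ 2^a * 2^(b.natAbs) := by
  rcases eq_or_lt_of_le h0 with rfl | hw
  · simp [phi]
  · unfold phi
    rw [abs_div, abs_mul, abs_of_pos hw, abs_pow, div_le_iff₀ hw]
    have e1 : |Real.log (1-w)| ^ (a-k) ≤ (2*w) ^ (a-k) :=
      pow_le_pow_left₀ (abs_nonneg _) (abs_log_one_sub_le h0 h1) _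
    have e2 : |(1-w)^(-b)| ≤ 2^(b.natAbs) := by
      simpa using zpow_le_two_pow (by linarith) (by linarith) (-b)
    calc |Real.log (1-w)| ^ (a-k) * |(1-w)^(-b)|
        ≤ (2*w) ^ (a-k) * 2^(b.natAbs) :=
          mul_le_mul e1 e2 (abs_nonneg _) (by positivity)
      _ = 2^(a-k) * (w^(a-k-1) * w) * 2^(b.natAbs) := by
          rw [mul_pow]; congr 2
          rw [← pow_succ]; congr 1; omega
      _ ≤ 2^a * (1 * w) * 2^(b.natAbs) := by
          have e3 : (2:ℝ)^(a-k) ≤ 2^a := pow_le_pow_right₀ (by norm_num) (by omega)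
          have e4 : w^(a-k-1) ≤ 1 := pow_le_one₀ h0 (by linarith)
          have e5 : w^(a-k-1) * w ≤ 1 * w := by
            apply mul_le_mul_of_nonneg_right e4 h0
          have : (0:ℝ) ≤ 2^(a-k) := by positivity
          nlinarith [pow_nonneg (show (0:ℝ) ≤ 2 by norm_num) (b.natAbs),
            mul_le_mul e3 e5 (by positivity) (by positivity)]
      _ = 2^a * 2^(b.natAbs) * w := by ring

lemma hfun_bound (b : ℤ) {w : ℝ} (h0 : 0 ≤ w) (h1 : w ≤ 1/2) :
    |hfun b w| ≤ |(b:ℝ)| * 2 ^ (b+1).natAbs := by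
  rcases eq_or_lt_of_le h0 with rfl | hw
  · simp [hfun]
  · unfold hfun
    rw [abs_div, abs_of_pos hw, div_le_iff₀ hw]
    exact psi_lipschitz b h0 h1

lemma tfacts {t : ℝ} (ht : 16 ≤ t) :
    2.772 ≤ Real.log t ∧ 1 ≤ Real.log (Real.log t) ∧
    0 < Real.log 2 / Real.log t ∧ Real.log 2 / Real.log t ≤ 1/2 ∧ 4 ≤ Real.sqrt t := by
  have h2 : (0.6931471803:ℝ) < Real.log 2 := Real.log_two_gt_d9
  have h2' : Real.log 2 < 0.6931471808 := Real.log_two_lt_d9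
  have hl16 : Real.log 16 = 4 * Real.log 2 := by
    rw [show (16:ℝ) = 2^(4:ℕ) by norm_num, Real.log_pow]; push_cast; ring
  have hL : 2.772 ≤ Real.log t := by
    have := Real.log_le_log (by norm_num) ht
    rw [hl16] at this; linarith
  have hL0 : (0:ℝ) < Real.log t := by linarith
  refine ⟨hL, ?_, by positivity, ?_, ?_⟩
  · rw [Real.le_log_iff_exp_le (by linarith)]
    have := Real.exp_one_lt_d9
    linarith
  · rw [div_le_iff₀ hL0]; linarith
  · have : Real.sqrt 16 ≤ Real.sqrt t := Real.sqrt_le_sqrt ht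
    rwa [show (16:ℝ) = 4^2 by norm_num, Real.sqrt_sq (by norm_num)] at this

lemma phi_contOn (a : ℕ) (b : ℤ) (k : ℕ) {ε : ℝ} (hε0 : 0 < ε) (hε : ε ≤ 1/2) :
    ContinuousOn (phi a b k) (Set.uIcc ε (1/2)) := by
  rw [Set.uIcc_of_le hε]
  have hmem : ∀ w ∈ Set.Icc ε (1/2:ℝ), (1:ℝ) - w ≠ 0 ∧ w ≠ 0 := by
    intro w hw; obtain ⟨h1, h2⟩ := hw
    constructor <;> [skip; skip] <;> intro h <;> nlinarith
  unfold phi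
  apply ContinuousOn.div
  · exact ((ContinuousOn.log (by fun_prop) (fun w hw => (hmem w hw).1)).pow _).mul
      ((ContinuousOn.zpow₀ (by fun_prop) (-b) (fun w hw => Or.inl (hmem w hw).1)))
  · exact continuousOn_id
  · exact fun w hw => (hmem w hw).2

lemma key_eq (a : ℕ) (b : ℤ) {t : ℝ} (ht : 16 ≤ t) :
    (∫ u in (2:ℝ)..Real.sqrt t,
        (Real.log (Real.log (t/u)))^a / (u * Real.log u * (Real.log (t/u))^b))
      = ∑ k ∈ Finset.range (a+1),
          ((Real.log t)^(-b) * (a.choose k : ℝ) * (Real.log (Real.log t))^k) *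
            ∫ w in (Real.log 2 / Real.log t)..(1/2:ℝ), phi a b k w := by
  obtain ⟨hL, hlam, hε0, hε2, hst⟩ := tfacts ht
  set L := Real.log t with hLdef
  set lam := Real.log L with hlamdef
  set ε := Real.log 2 / L with hεdef
  have hL0 : (0:ℝ) < L := by linarith
  have ht0 : (0:ℝ) < t := by linarith
  have huIcc : Set.uIcc (2:ℝ) (Real.sqrt t) = Set.Icc 2 (Real.sqrt t) :=
    Set.uIcc_of_le (by linarith)
  set g : ℝ → ℝ := fun w => (Real.log (L*(1-w)))^a / (w * (L*(1-w))^b) with hgdef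
  have hne : ∀ w ∈ Set.Icc ε (1/2:ℝ), L * (1-w) ≠ 0 ∧ w ≠ 0 := by
    intro w hw; obtain ⟨h1, h2⟩ := hw
    have hw1 : (0:ℝ) < 1 - w := by linarith
    have hw0 : (0:ℝ) < w := lt_of_lt_of_le hε0 h1
    exact ⟨by positivity, hw0.ne'⟩
  have hgcont : ContinuousOn g (Set.Icc ε (1/2)) := by
    apply ContinuousOn.div
    · exact (ContinuousOn.log (by fun_prop) (fun w hw => (hne w hw).1)).pow a
    · exact continuousOn_id.mul ((ContinuousOn.zpow₀ (by fun_prop) b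
        (fun w hw => Or.inl (hne w hw).1)))
    · exact fun w hw => mul_ne_zero (hne w hw).2 (zpow_ne_zero b (hne w hw).1)
  -- substitution u ↦ log u / L
  have hsub : (∫ u in (2:ℝ)..Real.sqrt t,
        (Real.log (Real.log (t/u)))^a / (u * Real.log u * (Real.log (t/u))^b))
      = ∫ w in ε..(1/2:ℝ), g w := by
    have hderiv : ∀ x ∈ Set.uIcc (2:ℝ) (Real.sqrt t),
        HasDerivAt (fun x => Real.log x / L) (x⁻¹ / L) x := by
      intro x hx
      rw [huIcc] at hx
      exact (Real.hasDerivAt_log (by linarith [hx.1])).div_const L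
    have hcont' : ContinuousOn (fun x : ℝ => x⁻¹ / L) (Set.uIcc (2:ℝ) (Real.sqrt t)) := by
      rw [huIcc]
      exact (continuousOn_inv₀.mono (by intro x hx; simp at hx ⊢; intro h; rw [h] at hx; linarith [hx.1])).div_const L
    have hmemimg : ∀ x ∈ Set.Icc (2:ℝ) (Real.sqrt t), Real.log x / L ∈ Set.Icc ε (1/2:ℝ) := by
      intro x hx
      obtain ⟨hx1, hx2⟩ := hx
      have hlx : Real.log 2 ≤ Real.log x := Real.log_le_log (by norm_num) hx1
      have hlx2 : Real.log x ≤ L / 2 := by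
        have := Real.log_le_log (by linarith) hx2
        rwa [Real.log_sqrt ht0.le] at this
      constructor
      · rw [hεdef, div_le_div_iff_of_pos_right hL0]; exact hlx
      · rw [div_le_iff₀ hL0]; linarith
    have himg : (fun x => Real.log x / L) '' Set.uIcc (2:ℝ) (Real.sqrt t) ⊆ Set.Icc ε (1/2) := by
      rw [huIcc]; rintro _ ⟨x, hx, rfl⟩; exact hmemimg x hx
    have heqon : ∀ x ∈ Set.uIcc (2:ℝ) (Real.sqrt t),
        (Real.log (Real.log (t/x)))^a / (x * Real.log x * (Real.log (t/x))^b)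
          = (x⁻¹ / L) • (g ∘ (fun x => Real.log x / L)) x := by
      intro x hx
      rw [huIcc] at hx
      obtain ⟨hx1, hx2⟩ := hx
      have hx0 : (0:ℝ) < x := by linarith
      have hlogtx : Real.log (t/x) = L * (1 - Real.log x / L) := by
        rw [Real.log_div ht0.ne' hx0.ne']; field_simp; rfl
      have hlx0 : (0:ℝ) < Real.log x := Real.log_pos (by linarith)
      have hLlx : Real.log x ≤ L / 2 := by
        have := Real.log_le_log hx0 hx2
        rwa [Real.log_sqrt ht0.le] at this
      have hd : Real.log (t/x) ≠ 0 := by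
        rw [Real.log_div ht0.ne' hx0.ne']; intro h; nlinarith
      have hzb : Real.log (t/x) ^ b ≠ 0 := zpow_ne_zero b hd
      simp only [hgdef, Function.comp, smul_eq_mul, ← hlogtx]
      field_simp
    rw [intervalIntegral.integral_congr heqon,
      intervalIntegral.integral_comp_smul_deriv' hderiv hcont' (hgcont.mono himg)]
    have h2 : Real.log 2 / L = ε := rfl
    have h3 : Real.log (Real.sqrt t) / L = 1/2 := by
      rw [Real.log_sqrt ht0.le, ← hLdef]
      field_simp
    rw [h2, h3]
  rw [hsub]
  -- expand g as a sum
  have hgeq : ∀ w ∈ Set.uIcc ε (1/2:ℝ),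
      g w = ∑ k ∈ Finset.range (a+1),
        (L^(-b) * (a.choose k : ℝ) * lam^k) * phi a b k w := by
    intro w hw
    rw [Set.uIcc_of_le hε2] at hw
    obtain ⟨hmul, hw0⟩ := hne w hw
    have hw1 : (0:ℝ) < 1 - w := by obtain ⟨h1, h2⟩ := hw; linarith
    have hlog : Real.log (L*(1-w)) = lam + Real.log (1-w) :=
      Real.log_mul hL0.ne' hw1.ne'
    have hzp : (L*(1-w))^b = L^b * (1-w)^b := mul_zpow L (1-w) b
    rw [hgdef]
    simp only []
    rw [hlog, hzp, add_pow lam (Real.log (1-w)) a, Finset.sum_div]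
    apply Finset.sum_congr rfl
    intro k hk
    unfold phi
    have hLb : L^b ≠ 0 := zpow_ne_zero b hL0.ne'
    have hwb : (1-w)^b ≠ 0 := zpow_ne_zero b hw1.ne'
    rw [zpow_neg, zpow_neg]
    field_simp
  rw [intervalIntegral.integral_congr hgeq]
  have hint : ∀ k ∈ Finset.range (a+1),
      IntervalIntegrable (fun w => (L^(-b) * (a.choose k : ℝ) * lam^k) * phi a b k w)
        volume ε (1/2) := by
    intro k _
    exact (((phi_contOn a b k hε0 hε2).const_smul
      (L^(-b) * (a.choose k : ℝ) * lam^k)).intervalIntegrable)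
  rw [intervalIntegral.integral_finset_sum hint]
  apply Finset.sum_congr rfl
  intro k _
  rw [intervalIntegral.integral_const_mul]

lemma hfun_contOn (b : ℤ) {ε : ℝ} (hε0 : 0 < ε) (hε : ε ≤ 1/2) :
    ContinuousOn (hfun b) (Set.uIcc ε (1/2)) := by
  rw [Set.uIcc_of_le hε]
  have hmem : ∀ w ∈ Set.Icc ε (1/2:ℝ), (1:ℝ) - w ≠ 0 ∧ w ≠ 0 := by
    intro w hw; obtain ⟨h1, h2⟩ := hw
    constructor <;> intro h <;> nlinarith
  unfold hfun
  exact ((ContinuousOn.zpow₀ (by fun_prop) (-b) (fun w hw => Or.inl (hmem w hw).1)).sub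
    continuousOn_const).div continuousOn_id (fun w hw => (hmem w hw).2)

lemma one_div_contOn {ε : ℝ} (hε0 : 0 < ε) (hε : ε ≤ 1/2) :
    ContinuousOn (fun w : ℝ => 1/w) (Set.uIcc ε (1/2)) := by
  rw [Set.uIcc_of_le hε]
  exact continuousOn_const.div continuousOn_id
    (fun w hw => by obtain ⟨h1, h2⟩ := hw; intro h; rw [h] at h1; linarith)

lemma phi_int (a : ℕ) (b : ℤ) {k : ℕ} (hk : k < a) :
    IntervalIntegrable (phi a b k) volume 0 (1/2) := by
  apply IntervalIntegrable.mono_fun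
    (_root_.intervalIntegrable_const (c := (2:ℝ)^a * 2^(b.natAbs)))
    ((phi_meas a b k).aestronglyMeasurable)
  refine (ae_restrict_iff' measurableSet_uIoc).2 (ae_of_all _ ?_)
  intro w hw
  rw [Set.uIoc_of_le (by norm_num : (0:ℝ) ≤ 1/2)] at hw
  simp only [Real.norm_eq_abs]
  rw [abs_of_nonneg (by positivity : (0:ℝ) ≤ 2^a * 2^(b.natAbs))]
  exact phi_bound a b hk hw.1.le hw.2

lemma hfun_int (b : ℤ) : IntervalIntegrable (hfun b) volume 0 (1/2) := by
  apply IntervalIntegrable.mono_fun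
    (_root_.intervalIntegrable_const (c := |(b:ℝ)| * 2 ^ (b+1).natAbs))
    ((hfun_meas b).aestronglyMeasurable)
  refine (ae_restrict_iff' measurableSet_uIoc).2 (ae_of_all _ ?_)
  intro w hw
  rw [Set.uIoc_of_le (by norm_num : (0:ℝ) ≤ 1/2)] at hw
  simp only [Real.norm_eq_abs]
  rw [abs_of_nonneg (by positivity : (0:ℝ) ≤ |(b:ℝ)| * 2^((b+1).natAbs))]
  exact hfun_bound b hw.1.le hw.2

lemma Ja_eq (a : ℕ) (b : ℤ) {ε L : ℝ} (hε0 : 0 < ε) (hε2 : ε ≤ 1/2)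
    (hL0 : 0 < L) (hεdef : ε = Real.log 2 / L) :
    (∫ w in ε..(1/2:ℝ), phi a b a w)
      = (Real.log L - Real.log (Real.log 2) - Real.log 2)
        + ∫ w in ε..(1/2:ℝ), hfun b w := by
  have heq : ∀ w ∈ Set.uIcc ε (1/2:ℝ), phi a b a w = 1/w + hfun b w := by
    intro w hw
    rw [Set.uIcc_of_le hε2] at hw
    have hw0 : w ≠ 0 := by intro h; rw [h] at hw; exact absurd hw.1 (not_le.2 hε0)
    unfold phi hfun
    rw [Nat.sub_self, pow_zero, one_mul, ← add_div]
    congr 1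
    ring
  rw [intervalIntegral.integral_congr heq,
    intervalIntegral.integral_add
      ((one_div_contOn hε0 hε2).intervalIntegrable)
      ((hfun_contOn b hε0 hε2).intervalIntegrable)]
  congr 1
  rw [integral_one_div (by
    rw [Set.uIcc_of_le hε2]
    intro h
    exact absurd h.1 (not_le.2 hε0))]
  have hl2 : Real.log 2 ≠ 0 := by
    have := Real.log_two_gt_d9; linarith
  rw [Real.log_div (by norm_num) (by rw [hεdef]; positivity)]
  rw [hεdef, Real.log_div hl2 hL0.ne']
  rw [show Real.log (1/2) = - Real.log 2 by rw [one_div, Real.log_inv]]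
  ring

/-- Lemma 3.2, equation (3.3). For `a ∈ ℕ` and `b ∈ ℤ`, as `t → ∞`,
`∫₂^{√t} (log log(t/u))^a / (u (log u) (log(t/u))^b) du
  = ((log log t)^{a+1} + P(log log t)) / (log t)^b + O((log log t)^a / (log t)^{b+1})`
for some real polynomial `P` of degree at most `a`. -/
theorem stmt1 (a : ℕ) (b : ℤ) :
    ∃ P : Polynomial ℝ, P.degree ≤ a ∧
      (fun t : ℝ =>
          (∫ u in (2 : ℝ)..Real.sqrt t,
              (Real.log (Real.log (t / u))) ^ a /
                (u * Real.log u * (Real.log (t / u)) ^ b))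
            - ((Real.log (Real.log t)) ^ (a + 1) + P.eval (Real.log (Real.log t))) /
                (Real.log t) ^ b)
        =O[atTop] fun t : ℝ => (Real.log (Real.log t)) ^ a / (Real.log t) ^ (b + 1) := by
  classical
  set c : ℕ → ℝ := fun k => ∫ w in (0:ℝ)..(1/2:ℝ), phi a b k w with hc
  set ch : ℝ := ∫ w in (0:ℝ)..(1/2:ℝ), hfun b w with hch
  set C0 : ℝ := 2^a * 2^(b.natAbs) + |(b:ℝ)| * 2^((b+1).natAbs) with hC0def
  have hC0a : (2:ℝ)^a * 2^(b.natAbs) ≤ C0 := le_add_of_nonneg_right (by positivity)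
  have hC0b : |(b:ℝ)| * 2^((b+1).natAbs) ≤ C0 := le_add_of_nonneg_left (by positivity)
  have hC0pos : 0 < C0 := lt_of_lt_of_le (by positivity) hC0a
  refine ⟨(∑ k ∈ Finset.range a, Polynomial.C ((a.choose k : ℝ) * c k) * Polynomial.X ^ k)
    + Polynomial.C (ch - Real.log 2 - Real.log (Real.log 2)) * Polynomial.X ^ a, ?_, ?_⟩
  · refine le_trans (Polynomial.degree_add_le _ _) (max_le ?_ ?_)
    · refine le_trans (Polynomial.degree_sum_le _ _) (Finset.sup_le fun k hk => ?_)
      refine le_trans (Polynomial.degree_C_mul_X_pow_le _ _) ?_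
      exact_mod_cast le_of_lt (Finset.mem_range.1 hk)
    · exact Polynomial.degree_C_mul_X_pow_le _ _
  · rw [Asymptotics.isBigO_iff]
    refine ⟨2^a * C0, ?_⟩
    filter_upwards [Filter.eventually_ge_atTop (16:ℝ)] with t ht
    obtain ⟨hL, hlam1, hε0, hε2, hst⟩ := tfacts ht
    set L := Real.log t with hLdef
    set lam := Real.log L with hlamdef
    set ε := Real.log 2 / L with hεdef
    have hL0 : (0:ℝ) < L := by linarith
    have hlam0 : (0:ℝ) < lam := by linarith
    have hevalP : Polynomial.eval lam
        ((∑ k ∈ Finset.range a, Polynomial.C ((a.choose k : ℝ) * c k) * Polynomial.X ^ k)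
          + Polynomial.C (ch - Real.log 2 - Real.log (Real.log 2)) * Polynomial.X ^ a)
        = (∑ k ∈ Finset.range a, ((a.choose k : ℝ) * c k) * lam^k)
          + (ch - Real.log 2 - Real.log (Real.log 2)) * lam^a := by
      simp [Polynomial.eval_finset_sum]
    rw [key_eq a b ht, hevalP]
    -- subset facts
    have hsub1 : Set.uIcc (0:ℝ) ε ⊆ Set.uIcc (0:ℝ) (1/2) := by
      rw [Set.uIcc_of_le hε0.le, Set.uIcc_of_le (by norm_num : (0:ℝ) ≤ 1/2)]
      exact Set.Icc_subset_Icc le_rfl hε2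
    have hsub2 : Set.uIcc ε (1/2:ℝ) ⊆ Set.uIcc (0:ℝ) (1/2) := by
      rw [Set.uIcc_of_le hε2, Set.uIcc_of_le (by norm_num : (0:ℝ) ≤ 1/2)]
      exact Set.Icc_subset_Icc hε0.le le_rfl
    have hsplitphi : ∀ k, k < a → (∫ w in ε..(1/2:ℝ), phi a b k w)
        = c k - ∫ w in (0:ℝ)..ε, phi a b k w := by
      intro k hk
      have h3 := integral_add_adjacent_intervals
        ((phi_int a b hk).mono_set hsub1) ((phi_int a b hk).mono_set hsub2)
      have hck : c k = ∫ w in (0:ℝ)..(1/2:ℝ), phi a b k w := rfl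
      rw [hck]; linarith
    have hsplith : (∫ w in ε..(1/2:ℝ), hfun b w) = ch - ∫ w in (0:ℝ)..ε, hfun b w := by
      have h3 := integral_add_adjacent_intervals
        ((hfun_int b).mono_set hsub1) ((hfun_int b).mono_set hsub2)
      have hch' : ch = ∫ w in (0:ℝ)..(1/2:ℝ), hfun b w := rfl
      rw [hch']; linarith
    have hJa := Ja_eq a b hε0 hε2 hL0 hεdef
    -- the main algebraic identity
    have hmain :
        (∑ k ∈ Finset.range (a+1), (L^(-b) * (a.choose k:ℝ) * lam^k)
            * ∫ w in ε..(1/2:ℝ), phi a b k w)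
          - ((lam^(a+1) + ((∑ k ∈ Finset.range a, ((a.choose k:ℝ) * c k) * lam^k)
              + (ch - Real.log 2 - Real.log (Real.log 2)) * lam^a)) / L^b)
        = -((∑ k ∈ Finset.range a, (L^(-b) * (a.choose k:ℝ) * lam^k)
            * ∫ w in (0:ℝ)..ε, phi a b k w)
          + (L^(-b) * lam^a) * ∫ w in (0:ℝ)..ε, hfun b w) := by
      rw [Finset.sum_range_succ, Nat.choose_self]
      rw [hJa, hsplith]
      rw [Finset.sum_congr rfl (fun k hk => by
        rw [hsplitphi k (Finset.mem_range.1 hk)])]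
      rw [div_eq_mul_inv, ← zpow_neg]
      have e1 : ∑ k ∈ Finset.range a, (L^(-b) * (a.choose k:ℝ) * lam^k)
          * (c k - ∫ w in (0:ℝ)..ε, phi a b k w)
        = (∑ k ∈ Finset.range a, (L^(-b) * (a.choose k:ℝ) * lam^k) * c k)
          - ∑ k ∈ Finset.range a, (L^(-b) * (a.choose k:ℝ) * lam^k)
              * ∫ w in (0:ℝ)..ε, phi a b k w := by
        rw [← Finset.sum_sub_distrib]
        exact Finset.sum_congr rfl (fun k _ => mul_sub _ _ _)
      rw [e1]
      have e2 : ((∑ k ∈ Finset.range a, ((a.choose k:ℝ) * c k) * lam^k)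
            + (ch - Real.log 2 - Real.log (Real.log 2)) * lam^a) * L^(-b)
          = (∑ k ∈ Finset.range a, (L^(-b) * (a.choose k:ℝ) * lam^k) * c k)
            + (ch - Real.log 2 - Real.log (Real.log 2)) * lam^a * L^(-b) := by
        rw [add_mul, Finset.sum_mul]
        congr 1
        exact Finset.sum_congr rfl (fun k _ => by ring)
      rw [add_mul, e2, pow_succ]
      push_cast
      ring
    rw [hmain, norm_neg]
    -- now the estimate
    have hebound : ∀ k, k < a → ‖∫ w in (0:ℝ)..ε, phi a b k w‖ ≤ C0 * ε := by
      intro k hk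
      have hb := intervalIntegral.norm_integral_le_of_norm_le_const (C := C0)
        (f := phi a b k) (a := 0) (b := ε) (fun x hx => by
          rw [Set.uIoc_of_le hε0.le] at hx
          rw [Real.norm_eq_abs]
          exact le_trans (phi_bound a b hk hx.1.le (le_trans hx.2 hε2)) hC0a)
      rwa [sub_zero, abs_of_pos hε0] at hb
    have hehbound : ‖∫ w in (0:ℝ)..ε, hfun b w‖ ≤ C0 * ε := by
      have hb := intervalIntegral.norm_integral_le_of_norm_le_const (C := C0)
        (f := hfun b) (a := 0) (b := ε) (fun x hx => by
          rw [Set.uIoc_of_le hε0.le] at hx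
          rw [Real.norm_eq_abs]
          exact le_trans (hfun_bound b hx.1.le (le_trans hx.2 hε2)) hC0b)
      rwa [sub_zero, abs_of_pos hε0] at hb
    have hLb0 : (0:ℝ) < L^(-b) := zpow_pos hL0 _
    have hstep : ‖(∑ k ∈ Finset.range a, (L^(-b) * (a.choose k:ℝ) * lam^k)
            * ∫ w in (0:ℝ)..ε, phi a b k w)
          + (L^(-b) * lam^a) * ∫ w in (0:ℝ)..ε, hfun b w‖
        ≤ 2^a * (L^(-b) * lam^a * (C0 * ε)) := by
      refine le_trans (norm_add_le _ _) ?_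
      have h1 : ‖∑ k ∈ Finset.range a, (L^(-b) * (a.choose k:ℝ) * lam^k)
            * ∫ w in (0:ℝ)..ε, phi a b k w‖
          ≤ ∑ k ∈ Finset.range a, (a.choose k:ℝ) * (L^(-b) * lam^a * (C0 * ε)) := by
        refine le_trans (norm_sum_le _ _) (Finset.sum_le_sum fun k hk => ?_)
        rw [norm_mul]
        have hk' := Finset.mem_range.1 hk
        have hpow : lam^k ≤ lam^a := pow_le_pow_right₀ hlam1 hk'.le
        have hnn : ‖L^(-b) * (a.choose k:ℝ) * lam^k‖ = L^(-b) * (a.choose k:ℝ) * lam^k := by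
          rw [Real.norm_eq_abs, abs_of_nonneg (by positivity)]
        rw [hnn]
        calc L^(-b) * (a.choose k:ℝ) * lam^k * ‖∫ w in (0:ℝ)..ε, phi a b k w‖
            ≤ L^(-b) * (a.choose k:ℝ) * lam^a * (C0 * ε) := by
              apply mul_le_mul (by gcongr) (hebound k hk') (norm_nonneg _) (by positivity)
          _ = (a.choose k:ℝ) * (L^(-b) * lam^a * (C0 * ε)) := by ring
      have h2 : ‖(L^(-b) * lam^a) * ∫ w in (0:ℝ)..ε, hfun b w‖
          ≤ 1 * (L^(-b) * lam^a * (C0 * ε)) := by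
        rw [norm_mul, Real.norm_eq_abs, abs_of_nonneg (by positivity), one_mul]
        calc L^(-b) * lam^a * ‖∫ w in (0:ℝ)..ε, hfun b w‖
            ≤ L^(-b) * lam^a * (C0 * ε) := by
              apply mul_le_mul_of_nonneg_left hehbound (by positivity)
          _ = _ := by ring
      refine le_trans (add_le_add h1 h2) ?_
      rw [← Finset.sum_mul, ← add_mul]
      apply mul_le_mul_of_nonneg_right _ (by positivity)
      have := Nat.sum_range_choose a
      have hsum : ∑ k ∈ Finset.range a, (a.choose k:ℝ) + 1 = 2^a := by
        have h' : (∑ k ∈ Finset.range (a+1), (a.choose k:ℝ)) = (2:ℝ)^a := by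
          exact_mod_cast congrArg (Nat.cast : ℕ → ℝ) this
        rw [Finset.sum_range_succ, Nat.choose_self] at h'
        push_cast at h'
        linarith
      linarith [hsum.le]
    refine le_trans hstep ?_
    -- compare with RHS norm
    have hrhs : ‖lam^a / L^(b+1)‖ = lam^a * L^(-(b+1)) := by
      rw [Real.norm_eq_abs, div_eq_mul_inv, ← zpow_neg,
        abs_of_nonneg (by positivity)]
    rw [hrhs]
    have hεle : ε ≤ 1/L := by
      rw [hεdef, div_le_div_iff_of_pos_right hL0]
      have := Real.log_two_lt_d9; linarith
    have hzp : L^(-b) * (1/L) = L^(-(b+1)) := by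
      rw [show -(b+1) = -b + (-1) by ring, zpow_add₀ hL0.ne', zpow_neg_one, one_div]
    calc 2^a * (L^(-b) * lam^a * (C0 * ε))
        ≤ 2^a * (L^(-b) * lam^a * (C0 * (1/L))) := by gcongr
      _ = 2^a * C0 * (lam^a * (L^(-b) * (1/L))) := by ring
      _ = 2^a * C0 * (lam^a * L^(-(b+1))) := by rw [hzp]
end

section
/- Let a ∈ ℕ₀, b ∈ ℤ, and let P be a real polynomial of degree a. Define D(t) = t·P(log log t)/(log t)^b. Then as t → ∞, D'(t) = P(log log t)/(log t)^b + O((log log t)^a/(log t)^{b+1}), and for every n ≥ 2, the n-th derivative satisfies D^{(n)}(t) = (n-2)!·(-1)^n·(-b·P + P')(log log t) / (t^{n-1}(log t)^{b+1}) + O((log log t)^a/(t^{n-1}(log t)^{b+2})). -/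
open Real Filter Asymptotics Polynomial

noncomputable def stepSeq (c₀ : ℤ) (k : ℕ) (S : ℕ → Polynomial ℝ) : ℕ → Polynomial ℝ
  | 0 => (-(k : ℝ)) • S 0
  | (j+1) => (-(k : ℝ)) • S (j+1) + ((S j).derivative + ((c₀ - (j : ℤ) : ℤ) : ℝ) • S j)

lemma stepSeq_degree (a : ℕ) (c₀ : ℤ) (k : ℕ) (S : ℕ → Polynomial ℝ)
    (hd : ∀ j, (S j).degree ≤ (a : ℕ)) : ∀ j, (stepSeq c₀ k S j).degree ≤ (a : ℕ) := by
  intro j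
  cases j with
  | zero => exact (degree_smul_le _ _).trans (hd 0)
  | succ j =>
    refine (degree_add_le _ _).trans (max_le ((degree_smul_le _ _).trans (hd _)) ?_)
    exact (degree_add_le _ _).trans (max_le ((degree_derivative_le).trans (hd _))
      ((degree_smul_le _ _).trans (hd _)))

lemma hasDerivAt_term (S : Polynomial ℝ) (e c : ℤ) {t : ℝ} (ht : Real.exp 1 < t) :
    HasDerivAt (fun s : ℝ => S.eval (Real.log (Real.log s)) * Real.log s ^ e * s ^ c)
      (((S.derivative + (e : ℝ) • S).eval (Real.log (Real.log t)) * Real.log t ^ (e - 1)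
          + (c : ℝ) * S.eval (Real.log (Real.log t)) * Real.log t ^ e) * t ^ (c - 1)) t := by
  have ht0 : (0 : ℝ) < t := (Real.exp_pos 1).trans ht
  have hl1 : 1 < Real.log t := (Real.lt_log_iff_exp_lt ht0).2 ht
  have hl0 : (0 : ℝ) < Real.log t := lt_trans one_pos hl1
  have hL : HasDerivAt Real.log t⁻¹ t := Real.hasDerivAt_log ht0.ne'
  have hLL : HasDerivAt (fun s : ℝ => Real.log (Real.log s)) ((Real.log t)⁻¹ * t⁻¹) t :=
    (Real.hasDerivAt_log hl0.ne').comp t hL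
  have hS : HasDerivAt (fun s : ℝ => S.eval (Real.log (Real.log s)))
      (S.derivative.eval (Real.log (Real.log t)) * ((Real.log t)⁻¹ * t⁻¹)) t :=
    (S.hasDerivAt _).comp t hLL
  have hz : HasDerivAt (fun s : ℝ => Real.log s ^ e)
      ((e : ℝ) * Real.log t ^ (e - 1) * t⁻¹) t :=
    (hasDerivAt_zpow e (Real.log t) (Or.inl hl0.ne')).comp t hL
  have hT : HasDerivAt (fun s : ℝ => s ^ c) ((c : ℝ) * t ^ (c - 1)) t :=
    hasDerivAt_zpow c t (Or.inl ht0.ne')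
  have := (hS.mul hz).mul hT
  refine this.congr_deriv ?_
  rw [zpow_sub_one₀ hl0.ne' e, zpow_sub_one₀ ht0.ne' c]
  simp only [Pi.mul_apply, Polynomial.eval_add, Polynomial.eval_smul, smul_eq_mul]
  ring

lemma deriv_formula (c₀ : ℤ) (k m : ℕ) (S : ℕ → Polynomial ℝ)
    (hpad : ∀ j, m ≤ j → S j = 0) (f : ℝ → ℝ)
    (hf : ∀ t : ℝ, Real.exp 1 < t → f t =
      ∑ j ∈ Finset.range m, (S j).eval (Real.log (Real.log t)) * Real.log t ^ (c₀ - (j : ℤ))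
        * t ^ (-(k : ℤ))) {t : ℝ} (ht : Real.exp 1 < t) :
    deriv f t = ∑ j ∈ Finset.range (m + 1),
      (stepSeq c₀ k S j).eval (Real.log (Real.log t)) * Real.log t ^ (c₀ - (j : ℤ))
        * t ^ (-(k : ℤ) - 1) := by
  have hev : f =ᶠ[nhds t] (fun s : ℝ => ∑ j ∈ Finset.range m,
      (S j).eval (Real.log (Real.log s)) * Real.log s ^ (c₀ - (j : ℤ)) * s ^ (-(k : ℤ))) := by
    filter_upwards [Ioi_mem_nhds ht] with s hs
    exact hf s hs
  rw [hev.deriv_eq]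
  have hsum : HasDerivAt (fun s : ℝ => ∑ j ∈ Finset.range m,
      (S j).eval (Real.log (Real.log s)) * Real.log s ^ (c₀ - (j : ℤ)) * s ^ (-(k : ℤ)))
      (∑ j ∈ Finset.range m,
        ((((S j).derivative + ((c₀ - (j : ℤ) : ℤ) : ℝ) • S j).eval (Real.log (Real.log t))
            * Real.log t ^ (c₀ - (j : ℤ) - 1)
          + ((-(k : ℤ) : ℤ) : ℝ) * (S j).eval (Real.log (Real.log t))
            * Real.log t ^ (c₀ - (j : ℤ))) * t ^ (-(k : ℤ) - 1))) t :=
    HasDerivAt.fun_sum (fun j _ => hasDerivAt_term (S j) (c₀ - (j : ℤ)) (-(k : ℤ)) ht)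
  rw [hsum.deriv]
  have split : ∀ j ∈ Finset.range (m + 1),
      (stepSeq c₀ k S j).eval (Real.log (Real.log t)) * Real.log t ^ (c₀ - (j : ℤ))
        * t ^ (-(k : ℤ) - 1)
      = ((-(k : ℝ)) * (S j).eval (Real.log (Real.log t)) * Real.log t ^ (c₀ - (j : ℤ))
          * t ^ (-(k : ℤ) - 1))
        + (if h : j = 0 then 0 else
            ((S (j-1)).derivative + ((c₀ - ((j:ℤ) - 1) : ℤ) : ℝ) • S (j-1)).eval
              (Real.log (Real.log t)) * Real.log t ^ (c₀ - (j : ℤ)) * t ^ (-(k : ℤ) - 1)) := by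
    intro j _
    cases j with
    | zero => simp [stepSeq]
    | succ j =>
      rw [dif_neg (Nat.succ_ne_zero j)]
      simp only [Nat.succ_sub_one, stepSeq, Polynomial.eval_add, Polynomial.eval_smul, smul_eq_mul]
      push_cast
      ring
  rw [Finset.sum_congr rfl split, Finset.sum_add_distrib]
  rw [Finset.sum_range_succ, hpad m le_rfl]
  simp only [Polynomial.eval_zero, mul_zero, zero_mul, add_zero]
  rw [Finset.sum_range_succ']
  simp only [Polynomial.eval_zero, mul_zero, zero_mul, add_zero]
  rw [dif_pos trivial, add_zero, ← Finset.sum_add_distrib]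
  refine Finset.sum_congr rfl fun j hj => ?_
  rw [dif_neg (Nat.succ_ne_zero j)]
  simp only [Nat.add_sub_cancel]
  push_cast
  ring

lemma zpow_log_isBigO {e e' : ℤ} (he : e ≤ e') :
    (fun t : ℝ => Real.log t ^ e) =O[atTop] (fun t : ℝ => Real.log t ^ e') := by
  rw [isBigO_iff]
  refine ⟨1, ?_⟩
  filter_upwards [eventually_ge_atTop (Real.exp 1)] with t ht
  have ht0 : (0 : ℝ) < t := lt_of_lt_of_le (Real.exp_pos 1) ht
  have hl : 1 ≤ Real.log t := (Real.le_log_iff_exp_le ht0).2 (by simpa using ht)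
  have hl0 : (0 : ℝ) < Real.log t := lt_of_lt_of_le one_pos hl
  rw [one_mul, Real.norm_eq_abs, Real.norm_eq_abs, abs_of_pos (zpow_pos hl0 _),
    abs_of_pos (zpow_pos hl0 _)]
  exact zpow_le_zpow_right₀ hl he

lemma poly_LL_isBigO (a : ℕ) (S : Polynomial ℝ) (hd : S.degree ≤ (a : ℕ)) :
    (fun t : ℝ => S.eval (Real.log (Real.log t))) =O[atTop]
      (fun t : ℝ => Real.log (Real.log t) ^ a) := by
  have h1 : S.degree ≤ ((Polynomial.X : Polynomial ℝ) ^ a).degree := by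
    rwa [Polynomial.degree_X_pow]
  have h2 := (Polynomial.isBigO_of_degree_le S (Polynomial.X ^ a) h1).comp_tendsto
    (Real.tendsto_log_atTop.comp Real.tendsto_log_atTop)
  simp only [Polynomial.eval_pow, Polynomial.eval_X] at h2
  exact h2

lemma bigO_piece (a : ℕ) (S : Polynomial ℝ) (hd : S.degree ≤ (a : ℕ)) {e e' : ℤ} (c : ℤ)
    (he : e ≤ e') :
    (fun t : ℝ => S.eval (Real.log (Real.log t)) * Real.log t ^ e * t ^ c) =O[atTop]
      (fun t : ℝ => Real.log (Real.log t) ^ a * Real.log t ^ e' * t ^ c) :=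
  ((poly_LL_isBigO a S hd).mul (zpow_log_isBigO he)).mul (isBigO_refl _ _)

/-- Lemma 6.5. Let `a ∈ ℕ`, `b ∈ ℤ`, `P` a real polynomial of degree `a`
and `D(t) = t·P(log log t)/(log t)^b`. Then as `t → ∞`:
`D'(t) = P(log log t)/(log t)^b + O((log log t)^a/(log t)^{b+1})`, and for `n ≥ 2`,
`D⁽ⁿ⁾(t) = (n-2)!·(-1)^n·(-bP + P')(log log t)/(t^{n-1}(log t)^{b+1})
           + O((log log t)^a/(t^{n-1}(log t)^{b+2}))`. -/
theorem stmt5 (a : ℕ) (b : ℤ) (P : Polynomial ℝ) (hP : P.degree = a) :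
    (fun t : ℝ =>
        deriv (fun s : ℝ => s * P.eval (Real.log (Real.log s)) / (Real.log s) ^ b) t
          - P.eval (Real.log (Real.log t)) / (Real.log t) ^ b)
      =O[atTop]
        (fun t : ℝ => (Real.log (Real.log t)) ^ a / (Real.log t) ^ (b + 1)) ∧
    ∀ n : ℕ, 2 ≤ n →
      (fun t : ℝ =>
          iteratedDeriv n
              (fun s : ℝ => s * P.eval (Real.log (Real.log s)) / (Real.log s) ^ b) t
            - ((n - 2).factorial : ℝ) * (-1) ^ n *
                ((-b : ℝ) • P + P.derivative).eval (Real.log (Real.log t)) /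
                (t ^ (n - 1) * (Real.log t) ^ (b + 1)))
        =O[atTop]
          (fun t : ℝ =>
            (Real.log (Real.log t)) ^ a / (t ^ (n - 1) * (Real.log t) ^ (b + 2))) := by
  set Q : Polynomial ℝ := (-b : ℝ) • P + P.derivative with hQdef
  set D : ℝ → ℝ := fun s : ℝ => s * P.eval (Real.log (Real.log s)) / (Real.log s) ^ b with hD
  set S₁ : ℕ → Polynomial ℝ := fun j => if j = 0 then P else if j = 1 then Q else 0 with hS₁
  have hQdeg : Q.degree ≤ (a : ℕ) := by
    refine (degree_add_le _ _).trans (max_le ((degree_smul_le _ _).trans hP.le) ?_)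
    exact degree_derivative_le.trans hP.le
  have hS₁deg : ∀ j, (S₁ j).degree ≤ (a : ℕ) := by
    intro j
    simp only [hS₁]
    split
    · exact hP.le
    split
    · exact hQdeg
    · simp
  have hS₁pad : ∀ j, 2 ≤ j → S₁ j = 0 := by
    intro j hj
    simp only [hS₁]
    rw [if_neg (by omega), if_neg (by omega)]
  have hDeq : D = fun s : ℝ => P.eval (Real.log (Real.log s)) * Real.log s ^ (-b : ℤ)
      * s ^ (1 : ℤ) := by
    funext s
    simp only [hD, zpow_neg, div_eq_mul_inv, zpow_one]
    ring
  have hderivD : ∀ t : ℝ, Real.exp 1 < t → deriv D t =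
      ∑ j ∈ Finset.range 2, (S₁ j).eval (Real.log (Real.log t))
        * Real.log t ^ (-b - (j : ℤ)) * t ^ (-((0 : ℕ) : ℤ)) := by
    intro t ht
    rw [hDeq, (hasDerivAt_term P (-b) 1 ht).deriv]
    simp only [Finset.sum_range_succ, Finset.sum_range_zero, hS₁]
    norm_num
    simp only [hQdef, Polynomial.eval_add, Polynomial.eval_smul, smul_eq_mul]
    rw [show (-b - 1 : ℤ) = -b + -1 by ring]
    ring
  have key : ∀ m : ℕ, ∃ S : ℕ → Polynomial ℝ,
      S 0 = ((m.factorial : ℝ) * (-1) ^ m) • Q ∧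
      (∀ j, (S j).degree ≤ (a : ℕ)) ∧
      (∀ j, m + 2 ≤ j → S j = 0) ∧
      ∀ t : ℝ, Real.exp 1 < t → iteratedDeriv (m + 2) D t =
        ∑ j ∈ Finset.range (m + 2), (S j).eval (Real.log (Real.log t))
          * Real.log t ^ (-(b + 1) - (j : ℤ)) * t ^ (-((m + 1 : ℕ) : ℤ)) := by
    intro m
    induction m with
    | zero =>
      refine ⟨fun j => stepSeq (-b) 0 S₁ (j + 1), ?_, ?_, ?_, ?_⟩
      · simp only [stepSeq, hS₁]
        norm_num
        rw [hQdef, neg_smul]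
        exact add_comm _ _
      · intro j
        exact stepSeq_degree a (-b) 0 S₁ hS₁deg (j + 1)
      · intro j hj
        simp [stepSeq, hS₁pad j (by omega), hS₁pad (j + 1) (by omega)]
      · intro t ht
        rw [show (0 + 2 : ℕ) = 2 by rfl, iteratedDeriv_succ, iteratedDeriv_one]
        rw [deriv_formula (-b) 0 2 S₁ hS₁pad (deriv D) hderivD ht]
        rw [Finset.sum_range_succ']
        simp only [stepSeq]
        norm_num
        refine Finset.sum_congr rfl fun j hj => ?_
        rw [show Real.log t ^ (-b - ((j : ℤ) + 1)) = Real.log t ^ (-1 + -b - (j : ℤ)) from by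
          congr 1; ring]
    | succ m ih =>
      obtain ⟨S, hS0, hSdeg, hSpad, hSform⟩ := ih
      refine ⟨stepSeq (-(b + 1)) (m + 1) S, ?_, ?_, ?_, ?_⟩
      · show (-((m + 1 : ℕ) : ℝ)) • S 0 = _
        rw [hS0, smul_smul]
        congr 1
        push_cast [Nat.factorial_succ]
        ring
      · exact stepSeq_degree a (-(b + 1)) (m + 1) S hSdeg
      · intro j hj
        obtain ⟨j', rfl⟩ : ∃ j', j = j' + 1 := ⟨j - 1, by omega⟩
        simp [stepSeq, hSpad j' (by omega), hSpad (j' + 1) (by omega)]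
      · intro t ht
        rw [show m + 1 + 2 = (m + 2) + 1 by ring, iteratedDeriv_succ]
        rw [deriv_formula (-(b + 1)) (m + 1) (m + 2) S hSpad _ hSform ht]
        refine Finset.sum_congr rfl fun j hj => ?_
        rw [show (-((m + 1 : ℕ) : ℤ) - 1) = -((m + 1 + 1 : ℕ) : ℤ) by push_cast; ring]
  constructor
  · have e1 : (fun t : ℝ => deriv D t - P.eval (Real.log (Real.log t)) / Real.log t ^ b)
        =ᶠ[atTop] (fun t : ℝ => Q.eval (Real.log (Real.log t)) * Real.log t ^ (-(b + 1) : ℤ)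
          * t ^ ((0 : ℤ))) := by
      filter_upwards [eventually_gt_atTop (Real.exp 1)] with t ht
      rw [hderivD t ht]
      simp only [Finset.sum_range_succ, Finset.sum_range_zero, hS₁]
      norm_num
      rw [show (-1 + -b : ℤ) = -(b + 1) from by ring, zpow_neg, div_eq_mul_inv]
      ring_nf
      rw [show (-1 - b : ℤ) = -(1 + b) from by ring, zpow_neg]
    have e2 : (fun t : ℝ => Real.log (Real.log t) ^ a / Real.log t ^ (b + 1))
        = (fun t : ℝ => Real.log (Real.log t) ^ a * Real.log t ^ (-(b + 1) : ℤ)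
            * t ^ ((0 : ℤ))) := by
      funext t
      rw [zpow_neg, div_eq_mul_inv]
      norm_num
    rw [e2]
    exact IsBigO.congr' (bigO_piece a Q hQdeg (0 : ℤ) le_rfl) e1.symm EventuallyEq.rfl
  · intro n hn
    obtain ⟨m, rfl⟩ : ∃ m, n = m + 2 := ⟨n - 2, by omega⟩
    obtain ⟨S, hS0, hSdeg, hSpad, hSform⟩ := key m
    have hsub2 : m + 2 - 2 = m := by omega
    have hsub1 : m + 2 - 1 = m + 1 := by omega
    rw [hsub2, hsub1]
    have e1 : (fun t : ℝ => iteratedDeriv (m + 2) D t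
          - (m.factorial : ℝ) * (-1) ^ (m + 2) * Q.eval (Real.log (Real.log t)) /
              (t ^ (m + 1) * Real.log t ^ (b + 1)))
        =ᶠ[atTop] (fun t : ℝ => ∑ j ∈ Finset.range (m + 1),
          (S (j + 1)).eval (Real.log (Real.log t))
            * Real.log t ^ (-(b + 1) - ((j + 1 : ℕ) : ℤ)) * t ^ (-((m + 1 : ℕ) : ℤ))) := by
      filter_upwards [eventually_gt_atTop (Real.exp 1)] with t ht
      rw [hSform t ht, Finset.sum_range_succ']
      have hmain : (S 0).eval (Real.log (Real.log t))
          * Real.log t ^ (-(b + 1) - ((0 : ℕ) : ℤ)) * t ^ (-((m + 1 : ℕ) : ℤ))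
          = (m.factorial : ℝ) * (-1) ^ (m + 2) * Q.eval (Real.log (Real.log t)) /
              (t ^ (m + 1) * Real.log t ^ (b + 1)) := by
        rw [hS0]
        simp only [Polynomial.eval_smul, smul_eq_mul, Nat.cast_zero, sub_zero]
        rw [zpow_neg, zpow_neg, zpow_natCast, div_eq_mul_inv, mul_inv]
        rw [show ((-1 : ℝ)) ^ (m + 2) = (-1) ^ m by rw [pow_add]; norm_num]
        ring
      rw [hmain]
      ring
    have e2 : (fun t : ℝ => Real.log (Real.log t) ^ a /
          (t ^ (m + 1) * Real.log t ^ (b + 2)))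
        = (fun t : ℝ => Real.log (Real.log t) ^ a * Real.log t ^ (-(b + 2) : ℤ)
            * t ^ (-((m + 1 : ℕ) : ℤ))) := by
      funext t
      rw [zpow_neg, zpow_neg, zpow_natCast, div_eq_mul_inv, mul_inv]
      ring
    rw [e2]
    refine IsBigO.congr' ?_ e1.symm EventuallyEq.rfl
    refine IsBigO.fun_sum fun j hj => ?_
    exact bigO_piece a (S (j + 1)) (hSdeg (j + 1)) _ (by push_cast; omega)
end

section
/- For every n ∈ ℕ₀, the n-th derivative of the function t ↦ Li(√t) satisfies (Li(√t))^{(n)} = [Γ(3/2)/Γ(3/2 - n)] · t^{1/2 - n}/log(√t) · (1 + O(1/log t)) as t → ∞. -/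
open Real Filter Asymptotics intervalIntegral

/-- The logarithmic integral `Li(x) = ∫₂ˣ dt / log t`. -/
noncomputable def logInt (x : ℝ) : ℝ := ∫ t in (2 : ℝ)..x, 1 / Real.log t

/-- The falling product `Γ(3/2)/Γ(3/2 - n) = (1/2)(-1/2)⋯(3/2 - n)`. -/
noncomputable def gammaRatio (n : ℕ) : ℝ :=
  ∏ i ∈ Finset.range n, ((3 : ℝ) / 2 - (i + 1))

open MeasureTheory Polynomial

noncomputable def I2 (x : ℝ) : ℝ := ∫ t in (2 : ℝ)..x, 1 / Real.log t ^ 2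

lemma contOn_aux (k : ℕ) {a b : ℝ} (h : 1 < min a b) :
    ContinuousOn (fun t : ℝ => 1 / Real.log t ^ k) (Set.uIcc a b) := by
  intro x hx
  have hx1 : 1 < x := lt_of_lt_of_le h (by
    rw [Set.uIcc] at hx; exact hx.1)
  have hlog : Real.log x ≠ 0 := ne_of_gt (Real.log_pos hx1)
  exact (ContinuousAt.div continuousAt_const
    ((Real.continuousAt_log (by linarith)).pow k) (pow_ne_zero _ hlog)).continuousWithinAt

lemma intInt_aux (k : ℕ) {a b : ℝ} (h : 1 < min a b) :
    IntervalIntegrable (fun t : ℝ => 1 / Real.log t ^ k) MeasureTheory.volume a b :=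
  (contOn_aux k h).intervalIntegrable

lemma hasDerivAt_logInt {x : ℝ} (hx : 1 < x) :
    HasDerivAt logInt (1 / Real.log x) x := by
  have hint : IntervalIntegrable (fun t : ℝ => 1 / Real.log t) MeasureTheory.volume 2 x := by
    have := intInt_aux 1 (a := 2) (b := x) (lt_min one_lt_two hx)
    simpa using this
  have hmeas : StronglyMeasurableAtFilter (fun t : ℝ => 1 / Real.log t) (nhds x)
      MeasureTheory.volume :=
    ((measurable_const.div Real.measurable_log).stronglyMeasurable).stronglyMeasurableAtFilter
  have hcont : ContinuousAt (fun t : ℝ => 1 / Real.log t) x :=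
    ContinuousAt.div continuousAt_const (Real.continuousAt_log (by linarith))
      (ne_of_gt (Real.log_pos hx))
  exact integral_hasDerivAt_right hint hmeas hcont

lemma one_lt_sqrt {t : ℝ} (ht : 1 < t) : 1 < Real.sqrt t := by
  nlinarith [Real.sq_sqrt (by linarith : (0:ℝ) ≤ t), Real.sqrt_nonneg t]

lemma hasDerivAt_f {t : ℝ} (ht : 1 < t) :
    HasDerivAt (fun s : ℝ => logInt (Real.sqrt s))
      (t ^ ((1:ℝ)/2 - 1) * (Real.log t)⁻¹) t := by
  have h0 : (0:ℝ) < t := by linarith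
  have hst : 1 < Real.sqrt t := one_lt_sqrt ht
  have h1 := (hasDerivAt_logInt hst).comp t (Real.hasDerivAt_sqrt h0.ne')
  refine h1.congr_deriv ?_
  rw [Real.log_sqrt h0.le]
  rw [show (1:ℝ)/2 - 1 = -(1/2) by norm_num, Real.rpow_neg h0.le, ← Real.sqrt_eq_rpow]
  have hs0 : Real.sqrt t ≠ 0 := by positivity
  have hl0 : Real.log t ≠ 0 := ne_of_gt (Real.log_pos ht)
  field_simp

lemma gamma_succ (n : ℕ) : gammaRatio (n+1) = gammaRatio n * ((1:ℝ)/2 - n) := by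
  rw [gammaRatio, Finset.prod_range_succ, ← gammaRatio]
  push_cast; ring

lemma gamma_ne (n : ℕ) : gammaRatio n ≠ 0 := by
  apply Finset.prod_ne_zero_iff.2
  intro i _
  intro h
  have h2 : ((2 * i + 2 : ℕ) : ℝ) = ((3:ℕ) : ℝ) := by push_cast; linarith
  have := Nat.cast_injective h2
  omega

lemma gamma_one : gammaRatio 1 = 1/2 := by
  simp [gammaRatio]; norm_num

lemma li_eq {x : ℝ} (hx : 2 ≤ x) :
    logInt x = x / Real.log x - 2 / Real.log 2 + I2 x := by
  have hmin : (1:ℝ) < min 2 x := lt_min one_lt_two (by linarith)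
  have h1 : IntervalIntegrable (fun t : ℝ => 1 / Real.log t) volume 2 x := by
    simpa using intInt_aux 1 hmin
  have h2 := intInt_aux 2 hmin
  have key : ∫ t in (2:ℝ)..x, (1 / Real.log t - 1 / Real.log t ^ 2) =
      x / Real.log x - 2 / Real.log 2 := by
    apply integral_eq_sub_of_hasDerivAt
    · intro y hy
      rw [Set.uIcc_of_le hx] at hy
      have hy1 : (1:ℝ) < y := by linarith [hy.1]
      have hyne : y ≠ 0 := by linarith
      have hlne : Real.log y ≠ 0 := ne_of_gt (Real.log_pos hy1)
      have := (hasDerivAt_id y).div (Real.hasDerivAt_log hyne) hlne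
      refine this.congr_deriv ?_
      field_simp
      simp only [id]
      ring
    · exact h1.sub h2
  have hsub := integral_sub h1 h2
  rw [key] at hsub
  unfold logInt I2
  linarith [hsub]

lemma I2_nonneg {x : ℝ} (hx : 2 ≤ x) : 0 ≤ I2 x := by
  apply intervalIntegral.integral_nonneg hx
  intro u hu
  positivity

lemma I2_bound {x : ℝ} (hx : 4 ≤ x) :
    I2 x ≤ Real.sqrt x / Real.log 2 ^ 2 + 4 * x / Real.log x ^ 2 := by
  have hx0 : (0:ℝ) < x := by linarith
  have h2s : 2 ≤ Real.sqrt x := by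
    nlinarith [Real.sq_sqrt hx0.le, Real.sqrt_nonneg x]
  have hsx : Real.sqrt x ≤ x := by
    nlinarith [Real.sq_sqrt hx0.le, Real.sqrt_nonneg x, h2s]
  have hmin1 : (1:ℝ) < min 2 (Real.sqrt x) := lt_min one_lt_two (by linarith)
  have hmin2 : (1:ℝ) < min (Real.sqrt x) x := lt_min (by linarith) (by linarith)
  have i1 := intInt_aux 2 hmin1
  have i2 := intInt_aux 2 hmin2
  have hsplit : I2 x = (∫ t in (2:ℝ)..Real.sqrt x, 1 / Real.log t ^ 2) +
      ∫ t in (Real.sqrt x)..x, 1 / Real.log t ^ 2 :=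
    (integral_add_adjacent_intervals i1 i2).symm
  have hlog2 : (0:ℝ) < Real.log 2 := Real.log_pos one_lt_two
  have hlsx : (0:ℝ) < Real.log (Real.sqrt x) := Real.log_pos (by linarith)
  have b1 : (∫ t in (2:ℝ)..Real.sqrt x, 1 / Real.log t ^ 2) ≤
      (Real.sqrt x - 2) * (1 / Real.log 2 ^ 2) := by
    have := intervalIntegral.integral_mono_on (g := fun _ => 1 / Real.log 2 ^ 2)
      h2s i1 intervalIntegrable_const (fun u hu => ?_)
    · simpa using this
    · have hu2 : (2:ℝ) ≤ u := hu.1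
      have : Real.log 2 ≤ Real.log u := Real.log_le_log (by norm_num) hu2
      exact one_div_le_one_div_of_le (by positivity) (by nlinarith)
  have b2 : (∫ t in (Real.sqrt x)..x, 1 / Real.log t ^ 2) ≤
      (x - Real.sqrt x) * (1 / Real.log (Real.sqrt x) ^ 2) := by
    have := intervalIntegral.integral_mono_on (g := fun _ => 1 / Real.log (Real.sqrt x) ^ 2)
      hsx i2 intervalIntegrable_const (fun u hu => ?_)
    · simpa using this
    · have : Real.log (Real.sqrt x) ≤ Real.log u := Real.log_le_log (by linarith) hu.1
      exact one_div_le_one_div_of_le (by positivity) (by nlinarith)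
  have hls : Real.log (Real.sqrt x) = Real.log x / 2 := Real.log_sqrt hx0.le
  have hlx : (0:ℝ) < Real.log x := Real.log_pos (by linarith)
  have e2 : (x - Real.sqrt x) * (1 / Real.log (Real.sqrt x) ^ 2) ≤ 4 * x / Real.log x ^ 2 := by
    calc (x - Real.sqrt x) * (1 / Real.log (Real.sqrt x) ^ 2)
        ≤ x * (1 / Real.log (Real.sqrt x) ^ 2) :=
          mul_le_mul_of_nonneg_right (by linarith [Real.sqrt_nonneg x]) (by positivity)
      _ = 4 * x / Real.log x ^ 2 := by rw [hls]; field_simp; ring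
  have e1 : (Real.sqrt x - 2) * (1 / Real.log 2 ^ 2) ≤ Real.sqrt x / Real.log 2 ^ 2 := by
    rw [show Real.sqrt x / Real.log 2 ^ 2 = Real.sqrt x * (1 / Real.log 2 ^ 2) by ring]
    exact mul_le_mul_of_nonneg_right (by linarith) (by positivity)
  linarith [hsplit, b1, b2, e1, e2]

lemma main_formula (n : ℕ) (hn : 1 ≤ n) :
    ∃ R : Polynomial ℝ, ∀ t : ℝ, 4 < t →
      iteratedDeriv n (fun s : ℝ => logInt (Real.sqrt s)) t =
        t ^ ((1:ℝ)/2 - n) * (2 * gammaRatio n * (Real.log t)⁻¹ +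
          Polynomial.eval ((Real.log t)⁻¹) R * ((Real.log t) ^ 2)⁻¹) := by
  induction n, hn using Nat.le_induction with
  | base =>
    refine ⟨0, fun t ht => ?_⟩
    rw [iteratedDeriv_one, (hasDerivAt_f (by linarith : 1 < t)).deriv, gamma_one]
    norm_num
  | succ n hn ih =>
    obtain ⟨R, hR⟩ := ih
    refine ⟨C ((1:ℝ)/2 - n) * R - C (2 * gammaRatio n)
      - X * (C 2 * R + X * derivative R), fun t ht => ?_⟩
    have ht0 : (0:ℝ) < t := by linarith
    have htne : t ≠ 0 := ht0.ne'
    have hL : Real.log t ≠ 0 := ne_of_gt (Real.log_pos (by linarith))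
    set c : ℝ := 2 * gammaRatio n with hc
    set g : ℝ → ℝ := fun s => s ^ ((1:ℝ)/2 - n) * (c * (Real.log s)⁻¹ +
          Polynomial.eval ((Real.log s)⁻¹) R * ((Real.log s) ^ 2)⁻¹) with hg
    have heq : deriv (iteratedDeriv n (fun s : ℝ => logInt (Real.sqrt s))) t = deriv g t := by
      apply Filter.EventuallyEq.deriv_eq
      filter_upwards [Ioi_mem_nhds ht] with s hs
      exact hR s hs
    rw [iteratedDeriv_succ, heq]
    -- now compute deriv g t
    have hA : HasDerivAt (fun s : ℝ => s ^ ((1:ℝ)/2 - n))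
        (((1:ℝ)/2 - n) * t ^ ((1:ℝ)/2 - n - 1)) t :=
      Real.hasDerivAt_rpow_const (Or.inl htne)
    have hlog : HasDerivAt Real.log t⁻¹ t := Real.hasDerivAt_log htne
    have hinv : HasDerivAt (fun s => (Real.log s)⁻¹) (-t⁻¹ / Real.log t ^ 2) t := hlog.inv hL
    have hpoly : HasDerivAt (fun s : ℝ => Polynomial.eval ((Real.log s)⁻¹) R)
        (Polynomial.eval ((Real.log t)⁻¹) (derivative R) * (-t⁻¹ / Real.log t ^ 2)) t :=
      by exact (R.hasDerivAt ((Real.log t)⁻¹)).comp t hinv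
    have hsq : HasDerivAt (fun s : ℝ => ((Real.log s) ^ 2)⁻¹)
        (-(2 * Real.log t ^ 1 * t⁻¹) / (Real.log t ^ 2) ^ 2) t :=
      (hlog.pow 2).inv (pow_ne_zero 2 hL)
    have hB : HasDerivAt (fun s : ℝ => c * (Real.log s)⁻¹ +
          Polynomial.eval ((Real.log s)⁻¹) R * ((Real.log s) ^ 2)⁻¹)
        (c * (-t⁻¹ / Real.log t ^ 2) +
          ((Polynomial.eval ((Real.log t)⁻¹) (derivative R) * (-t⁻¹ / Real.log t ^ 2)) *
            ((Real.log t) ^ 2)⁻¹ +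
           Polynomial.eval ((Real.log t)⁻¹) R * (-(2 * Real.log t ^ 1 * t⁻¹) / (Real.log t ^ 2) ^ 2))) t :=
      (hinv.const_mul c).add (hpoly.mul hsq)
    have hgd := (hA.mul hB).deriv
    rw [show deriv g t = _ from hgd]
    -- algebra
    have hexp : (1:ℝ)/2 - (n:ℝ) - 1 = (1:ℝ)/2 - ((n:ℕ)+1 : ℕ) := by push_cast; ring
    have hstep : t ^ ((1:ℝ)/2 - (n:ℝ)) = t ^ ((1:ℝ)/2 - ((n:ℕ)+1 : ℕ)) * t := by
      rw [← Real.rpow_add_one htne]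
      congr 1
      push_cast; ring
    rw [hexp] at *
    rw [gamma_succ, hstep]
    simp only [eval_sub, eval_mul, eval_add, eval_C, eval_X, pow_one]
    field_simp
    ring

lemma hev : ∀ᶠ x : ℝ in atTop, Real.log x ^ 2 ≤ Real.sqrt x := by
  have h := isLittleO_log_rpow_rpow_atTop (s := 1/2) (2:ℝ) (by norm_num)
  have h2 := h.def one_pos
  filter_upwards [h2, eventually_ge_atTop (1:ℝ)] with x hx hx1
  have hl0 : (0:ℝ) ≤ Real.log x := Real.log_nonneg hx1
  have hpow : Real.log x ^ (2:ℝ) = Real.log x ^ 2 := by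
    rw [show (2:ℝ) = ((2:ℕ):ℝ) by norm_num, Real.rpow_natCast]
  rw [Real.norm_eq_abs, Real.norm_eq_abs, one_mul] at hx
  calc Real.log x ^ 2 = |Real.log x ^ (2:ℝ)| := by
        rw [hpow, abs_of_nonneg (by positivity)]
    _ ≤ |x ^ ((1:ℝ)/2)| := hx
    _ = Real.sqrt x := by
        rw [abs_of_nonneg (Real.rpow_nonneg (by linarith) _), Real.sqrt_eq_rpow]

lemma hIK : (fun x : ℝ => I2 x - 2 / Real.log 2) =O[atTop] fun x => x / Real.log x ^ 2 := by
  rw [isBigO_iff]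
  refine ⟨1 / Real.log 2 ^ 2 + 5, ?_⟩
  have hlog2 : (0:ℝ) < Real.log 2 := Real.log_pos one_lt_two
  filter_upwards [hev, eventually_ge_atTop (4:ℝ),
    eventually_ge_atTop ((2 / Real.log 2) ^ 2)] with x h1 h4 hm
  have hx0 : (0:ℝ) < x := by linarith
  have hlx : (0:ℝ) < Real.log x := Real.log_pos (by linarith)
  have hL2 : (0:ℝ) < Real.log x ^ 2 := by positivity
  have hs0 := Real.sqrt_nonneg x
  have hss := Real.sq_sqrt hx0.le
  have hsq : Real.sqrt x ≤ x / Real.log x ^ 2 := by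
    rw [le_div_iff₀ hL2]
    nlinarith [mul_le_mul_of_nonneg_left h1 hs0]
  have hK : 2 / Real.log 2 ≤ Real.sqrt x := by nlinarith
  have hI0 := I2_nonneg (by linarith : (2:ℝ) ≤ x)
  have hIb := I2_bound h4
  have hxL : (0:ℝ) < x / Real.log x ^ 2 := by positivity
  rw [Real.norm_eq_abs, Real.norm_eq_abs, abs_of_pos hxL]
  have hK0 : (0:ℝ) < 2 / Real.log 2 := by positivity
  have habs : |I2 x - 2 / Real.log 2| ≤ I2 x + 2 / Real.log 2 :=
    abs_le.mpr ⟨by linarith, by linarith⟩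
  have hs1 : Real.sqrt x / Real.log 2 ^ 2 ≤ (1 / Real.log 2 ^ 2) * (x / Real.log x ^ 2) := by
    rw [div_eq_mul_one_div, mul_comm]
    exact mul_le_mul_of_nonneg_left hsq (by positivity)
  have e1 : (1 / Real.log 2 ^ 2 + 5) * (x / Real.log x ^ 2) =
      1 / Real.log 2 ^ 2 * (x / Real.log x ^ 2) + 5 * (x / Real.log x ^ 2) := by ring
  have e2 : 4 * x / Real.log x ^ 2 = 4 * (x / Real.log x ^ 2) := by ring
  linarith

lemma tendsto_sqrt_atTop : Tendsto Real.sqrt atTop atTop :=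
  (tendsto_rpow_atTop (by norm_num : (0:ℝ) < 1/2)).congr
    (fun x => (Real.sqrt_eq_rpow x).symm)

lemma hF : (fun x : ℝ => logInt x * Real.log x / x - 1) =O[atTop] fun x => 1 / Real.log x := by
  have h1 : (fun x : ℝ => logInt x * Real.log x / x - 1) =ᶠ[atTop]
      fun x => (I2 x - 2 / Real.log 2) * (Real.log x / x) := by
    filter_upwards [eventually_ge_atTop (2:ℝ)] with x hx
    have hx0 : x ≠ 0 := by linarith
    have hl : Real.log x ≠ 0 := ne_of_gt (Real.log_pos (by linarith))
    rw [li_eq hx]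
    field_simp
    ring
  have h2 := hIK.mul (isBigO_refl (fun x : ℝ => Real.log x / x) atTop)
  have h3 : (fun x : ℝ => x / Real.log x ^ 2 * (Real.log x / x)) =ᶠ[atTop]
      fun x => 1 / Real.log x := by
    filter_upwards [eventually_ge_atTop (2:ℝ)] with x hx
    have hx0 : x ≠ 0 := by linarith
    have hl : Real.log x ≠ 0 := ne_of_gt (Real.log_pos (by linarith))
    field_simp
  exact h1.trans_isBigO (h2.trans h3.isBigO)

/-- equation (5.12). For every `n ∈ ℕ`, as `t → ∞`,
`(Li(√t))⁽ⁿ⁾ = [Γ(3/2)/Γ(3/2-n)] · t^{1/2-n}/log(√t) · (1 + O(1/log t))`. -/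
theorem stmt6 (n : ℕ) :
    ∃ E : ℝ → ℝ, (E =O[atTop] fun t : ℝ => 1 / Real.log t) ∧
      ∀ᶠ t : ℝ in atTop,
        iteratedDeriv n (fun s : ℝ => logInt (Real.sqrt s)) t =
          gammaRatio n * t ^ ((1 : ℝ) / 2 - n) / Real.log (Real.sqrt t) * (1 + E t) := by
  rcases Nat.eq_zero_or_pos n with hn | hn
  · subst hn
    refine ⟨fun t => logInt (Real.sqrt t) * Real.log (Real.sqrt t) / Real.sqrt t - 1, ?_, ?_⟩
    · have hFc := hF.comp_tendsto _root_.tendsto_sqrt_atTop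
      have heq : ((fun x : ℝ => 1 / Real.log x) ∘ Real.sqrt) =ᶠ[atTop]
          fun t : ℝ => 2 * (1 / Real.log t) := by
        filter_upwards [eventually_ge_atTop (0:ℝ)] with t ht
        simp only [Function.comp_apply, Real.log_sqrt ht]
        rw [one_div, one_div, inv_div]
        ring
      exact (hFc.congr' (EventuallyEq.refl _ _) heq).trans
        ((isBigO_refl (fun t : ℝ => 1 / Real.log t) atTop).const_mul_left 2)
    · filter_upwards [eventually_ge_atTop (4:ℝ)] with t ht
      have ht0 : (0:ℝ) < t := by linarith
      have hst : (1:ℝ) < Real.sqrt t := by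
        nlinarith [Real.sq_sqrt ht0.le, Real.sqrt_nonneg t]
      have hsne : Real.sqrt t ≠ 0 := by positivity
      have hlne : Real.log (Real.sqrt t) ≠ 0 := ne_of_gt (Real.log_pos hst)
      have hrw : t ^ ((1:ℝ)/2 - (0:ℕ)) = Real.sqrt t := by
        rw [Real.sqrt_eq_rpow]; norm_num
      rw [iteratedDeriv_zero]
      rw [show gammaRatio 0 = 1 by simp [gammaRatio], hrw]
      field_simp
      ring
  · obtain ⟨R, hR⟩ := main_formula n hn
    refine ⟨fun t => Polynomial.eval ((Real.log t)⁻¹) R / (2 * gammaRatio n * Real.log t),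
      ?_, ?_⟩
    · have htend : Tendsto (fun t : ℝ => (Real.log t)⁻¹) atTop (nhds 0) :=
        Real.tendsto_log_atTop.inv_tendsto_atTop
      have hbd : (fun t : ℝ => Polynomial.eval ((Real.log t)⁻¹) R) =O[atTop]
          (fun _ => (1:ℝ)) :=
        (((Polynomial.continuous R).tendsto 0).comp htend).isBigO_one ℝ
      have h2 := hbd.mul (isBigO_refl (fun t : ℝ => 1 / Real.log t) atTop)
      simp only [one_mul] at h2
      have h3 : (fun t : ℝ => Polynomial.eval ((Real.log t)⁻¹) R /
          (2 * gammaRatio n * Real.log t)) =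
          fun t => (1 / (2 * gammaRatio n)) *
            (Polynomial.eval ((Real.log t)⁻¹) R * (1 / Real.log t)) := by
        funext t
        simp [div_eq_mul_inv, mul_inv]
        ring
      rw [h3]
      exact h2.const_mul_left _
    · filter_upwards [eventually_gt_atTop (4:ℝ)] with t ht
      have ht0 : (0:ℝ) < t := by linarith
      have hlne : Real.log t ≠ 0 := ne_of_gt (Real.log_pos (by linarith))
      have hγ : gammaRatio n ≠ 0 := gamma_ne n
      rw [hR t ht, Real.log_sqrt ht0.le]
      field_simp
end

section
/- Product rule for strange functions: Let f be strange with respect to g on [2,∞), and let h and m be smooth functions such that g^{(k)}(t)·h^{(ℓ)}(t) = O(m^{(k+ℓ)}(t)) for all k, ℓ ∈ ℕ₀. Then f·h is strange with respect to m, and its n-th pseudo-derivative is given by (fh)^{(n)}(t) = Σ_{k=0}^{n} C(n,k) f^{(k)}(t) h^{(n-k)}(t). -/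
open Real Filter Asymptotics Finset

/-- `F` is a sequence of pseudo-derivatives witnessing that `f` is strange with
respect to `g`: each `F n` is `C¹`, `f = F 0 + O(g)` and
`(F n)' = F (n+1) + O(g^{(n+1)})` as `t → ∞`. -/
def IsStrangeSeq (f g : ℝ → ℝ) (F : ℕ → ℝ → ℝ) : Prop :=
  (∀ n : ℕ, ContDiff ℝ 1 (F n)) ∧
  ((fun t => f t - F 0 t) =O[atTop] g) ∧
  (∀ n : ℕ, (fun t => deriv (F n) t - F (n + 1) t) =O[atTop] iteratedDeriv (n + 1) g)

lemma smooth_iterDeriv {h : ℝ → ℝ} (hh : ContDiff ℝ (⊤ : ℕ∞) h) (j : ℕ) :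
    ContDiff ℝ (⊤ : ℕ∞) (iteratedDeriv j h) := by
  rw [iteratedDeriv_eq_iterate]
  exact (hh.of_le (by simp)).iterate_deriv j

/-- Pascal-style reindexing identity. -/
lemma pascal_sum (n : ℕ) (b c : ℕ → ℝ) :
    ∑ k ∈ range (n + 2), (((n + 1).choose k : ℝ)) * b k * c (n + 1 - k)
      = (∑ k ∈ range (n + 1), ((n.choose k : ℝ)) * b k * c (n + 1 - k))
        + ∑ k ∈ range (n + 1), ((n.choose k : ℝ)) * b (k + 1) * c (n - k) := by
  rw [Finset.sum_range_succ' _ (n + 1)]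
  have h1 : ∀ i ∈ range (n + 1),
      (((n + 1).choose (i + 1) : ℝ)) * b (i + 1) * c (n + 1 - (i + 1))
        = ((n.choose i : ℝ)) * b (i + 1) * c (n - i)
          + ((n.choose (i + 1) : ℝ)) * b (i + 1) * c (n - i) := by
    intro i hi
    have hsub : n + 1 - (i + 1) = n - i := by omega
    rw [Nat.choose_succ_succ, hsub]
    push_cast
    ring
  rw [Finset.sum_congr rfl h1, Finset.sum_add_distrib]
  have h2 : (∑ k ∈ range (n + 1), ((n.choose k : ℝ)) * b k * c (n + 1 - k))
      = (∑ i ∈ range (n + 1), ((n.choose (i + 1) : ℝ)) * b (i + 1) * c (n + 1 - (i + 1)))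
        + ((n.choose 0 : ℝ)) * b 0 * c (n + 1 - 0) := by
    have e1 := Finset.sum_range_succ (fun k => ((n.choose k : ℝ)) * b k * c (n + 1 - k)) (n + 1)
    have e2 := Finset.sum_range_succ' (fun k => ((n.choose k : ℝ)) * b k * c (n + 1 - k)) (n + 1)
    have z : ((n.choose (n + 1) : ℝ)) = 0 := by
      rw [Nat.choose_eq_zero_of_lt (by omega)]; simp
    simp only [z, zero_mul] at e1
    rw [add_zero] at e1
    rw [← e1, e2]
  have h3 : ∀ i ∈ range (n + 1), ((n.choose (i + 1) : ℝ)) * b (i + 1) * c (n + 1 - (i + 1))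
      = ((n.choose (i + 1) : ℝ)) * b (i + 1) * c (n - i) := by
    intro i hi
    have hsub : n + 1 - (i + 1) = n - i := by omega
    rw [hsub]
  rw [h2, Finset.sum_congr rfl h3]
  simp
  ring

lemma alg_identity (n : ℕ) (a b c : ℕ → ℝ) :
    (∑ k ∈ range (n + 1), ((n.choose k : ℝ) * a k * c (n - k)
        + (n.choose k : ℝ) * b k * c (n - k + 1)))
      - ∑ k ∈ range (n + 2), (((n + 1).choose k : ℝ)) * b k * c (n + 1 - k)
    = ∑ k ∈ range (n + 1), (n.choose k : ℝ) * (a k - b (k + 1)) * c (n - k) := by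
  rw [pascal_sum]
  have h1 : ∀ k ∈ range (n + 1), ((n.choose k : ℝ)) * b k * c (n + 1 - k)
      = ((n.choose k : ℝ)) * b k * c (n - k + 1) := by
    intro k hk
    have hsub : n + 1 - k = n - k + 1 := by
      have := Finset.mem_range.mp hk; omega
    rw [hsub]
  rw [Finset.sum_congr rfl h1, Finset.sum_add_distrib]
  have hring : ∀ A B C D : ℝ, A + B - (B + C) = D → A - C = D := by
    intro A B C D hd; linarith
  rw [show ∀ A B C : ℝ, A + B - (B + C) = A - C from fun A B C => by ring,
    ← Finset.sum_sub_distrib]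
  apply Finset.sum_congr rfl
  intro k hk
  ring

/-- Lemma 5.4 (product rule for strange functions). If `f` is strange
with respect to `g` with pseudo-derivatives `F`, and `h`, `m` are smooth with
`g^{(k)}·h^{(ℓ)} = O(m^{(k+ℓ)})` for all `k, ℓ`, then `f·h` is strange with respect
to `m`, with pseudo-derivatives `(fh)^{(n)} = ∑_{k=0}^n C(n,k) f^{(k)} h^{(n-k)}`. -/
theorem stmt9 (f g h m : ℝ → ℝ) (F : ℕ → ℝ → ℝ)
    (hg : ContDiff ℝ (⊤ : ℕ∞) g) (hh : ContDiff ℝ (⊤ : ℕ∞) h) (hm : ContDiff ℝ (⊤ : ℕ∞) m)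
    (hF : IsStrangeSeq f g F)
    (hcond : ∀ k ℓ : ℕ,
      (fun t => iteratedDeriv k g t * iteratedDeriv ℓ h t)
        =O[atTop] iteratedDeriv (k + ℓ) m) :
    IsStrangeSeq (fun t => f t * h t) m
      (fun n t => ∑ k ∈ Finset.range (n + 1),
        (n.choose k : ℝ) * F k t * iteratedDeriv (n - k) h t) := by
  obtain ⟨hF1, hF0, hFd⟩ := hF
  have hH : ∀ j : ℕ, ContDiff ℝ (⊤ : ℕ∞) (iteratedDeriv j h) := smooth_iterDeriv hh
  have hHd : ∀ (j : ℕ) (t : ℝ),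
      HasDerivAt (iteratedDeriv j h) (iteratedDeriv (j + 1) h t) t := by
    intro j t
    have := (((hH j).differentiable (by simp)) t).hasDerivAt
    rwa [iteratedDeriv_succ]
  refine ⟨?_, ?_, ?_⟩
  · intro n
    apply ContDiff.sum
    intro k _
    exact (contDiff_const.mul (hF1 k)).mul ((hH (n - k)).of_le (by exact_mod_cast le_top))
  · have heq : (fun t => f t * h t - ∑ k ∈ Finset.range (0 + 1),
        ((0 : ℕ).choose k : ℝ) * F k t * iteratedDeriv (0 - k) h t)
        = fun t => (f t - F 0 t) * h t := by
      funext t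
      simp [Finset.sum_range_one, iteratedDeriv_zero]
      ring
    rw [heq]
    have h00 := hcond 0 0
    simp only [iteratedDeriv_zero, Nat.add_zero] at h00
    exact (hF0.mul (isBigO_refl h atTop)).trans h00
  · intro n
    have hkey : (fun t => deriv (fun t => ∑ k ∈ Finset.range (n + 1),
          (n.choose k : ℝ) * F k t * iteratedDeriv (n - k) h t) t
          - ∑ k ∈ Finset.range (n + 1 + 1),
            ((n + 1).choose k : ℝ) * F k t * iteratedDeriv (n + 1 - k) h t)
        = fun t => ∑ k ∈ Finset.range (n + 1),
            (n.choose k : ℝ) * (deriv (F k) t - F (k + 1) t) * iteratedDeriv (n - k) h t := by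
      funext t
      have hder : HasDerivAt (fun t => ∑ k ∈ Finset.range (n + 1),
          (n.choose k : ℝ) * F k t * iteratedDeriv (n - k) h t)
          (∑ k ∈ Finset.range (n + 1),
            ((n.choose k : ℝ) * deriv (F k) t * iteratedDeriv (n - k) h t
              + (n.choose k : ℝ) * F k t * iteratedDeriv (n - k + 1) h t)) t := by
        apply HasDerivAt.fun_sum
        intro k _
        have hFk : HasDerivAt (F k) (deriv (F k) t) t :=
          (((hF1 k).differentiable one_ne_zero) t).hasDerivAt
        exact (hFk.const_mul ((n.choose k : ℝ))).mul (hHd (n - k) t)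
      rw [hder.deriv]
      exact alg_identity n (fun k => deriv (F k) t) (fun k => F k t)
        (fun j => iteratedDeriv j h t)
    rw [hkey]
    apply Asymptotics.IsBigO.fun_sum
    intro k hk
    have hk' : k ≤ n := by have := Finset.mem_range.mp hk; omega
    have h1 : (fun t => (deriv (F k) t - F (k + 1) t) * iteratedDeriv (n - k) h t)
        =O[atTop] (fun t => iteratedDeriv (k + 1) g t * iteratedDeriv (n - k) h t) :=
      (hFd k).mul (isBigO_refl _ atTop)
    have h2 := h1.trans (hcond (k + 1) (n - k))
    have hsum : k + 1 + (n - k) = n + 1 + 1 - 1 := by omega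
    rw [hsum] at h2
    have h3 := h2.const_mul_left ((n.choose k : ℝ))
    have heq : (fun t => (n.choose k : ℝ) * (deriv (F k) t - F (k + 1) t)
        * iteratedDeriv (n - k) h t)
        = fun t => (n.choose k : ℝ) * ((deriv (F k) t - F (k + 1) t)
          * iteratedDeriv (n - k) h t) := by
      funext t; ring
    rw [heq]
    exact h3
end
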